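/- arXiv:1407.7923 — 3 statements merged into one kernel-verified Lean document; each statement's English description precedes it below -/
import Mathlib

section
/- Let F be a finite field and d a positive integer with gcd(d, |F*|) = 1. Then Σ_{u∈F*} W_{F,d}(u)³ = |F|² · V₁, where V₁ = |{v ∈ F : v^d + (1-v)^d = 1}|. -/
open Complex

/-- The canonical additive character of a finite field `F` of characteristic `p`:
`ψ(x) = exp(2πi · Tr_{F/F_p}(x) / p)`. -/
noncomputable def psi (p : ℕ) [Fact p.Prime] (F : Type*) [Field F] [Fintype F]
    [Algebra (ZMod p) F] (x : F) : ℂ :=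
  Complex.exp (2 * Real.pi * Complex.I * ((Algebra.trace (ZMod p) F x).val : ℂ) / (p : ℂ))

/-- The Weil sum `W_{F,d}(u) = Σ_{x ∈ F} ψ(x^d + u x)`. -/
noncomputable def weilSum (p : ℕ) [Fact p.Prime] (F : Type*) [Field F] [Fintype F]
    [Algebra (ZMod p) F] (d : ℕ) (u : F) : ℂ :=
  ∑ x : F, psi p F (x ^ d + u * x)

section aux
variable (p : ℕ) [Fact p.Prime] (F : Type*) [Field F] [Fintype F] [Algebra (ZMod p) F]

private lemma tnd {a : F} (ha : a ≠ 0) : ∃ b : F, Algebra.trace (ZMod p) F (a * b) ≠ 0 := by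
  have htr := (traceForm_nondegenerate (ZMod p) F).1 a
  simp_rw [Algebra.traceForm_apply] at htr
  by_contra! hf
  exact ha (htr hf)

private lemma pC_ne : (p : ℂ) ≠ 0 := by
  exact_mod_cast (Fact.out (p := p.Prime)).ne_zero

private lemma exp_mod (m : ℕ) :
    Complex.exp (2 * Real.pi * Complex.I * ((m % p : ℕ) : ℂ) / p) =
    Complex.exp (2 * Real.pi * Complex.I * (m : ℂ) / p) := by
  have hp := pC_ne p
  have h : (m : ℂ) = ((m % p : ℕ) : ℂ) + p * ((m / p : ℕ) : ℂ) := by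
    conv_lhs => rw [← Nat.mod_add_div m p]
    push_cast
    ring
  rw [h]
  rw [show 2 * Real.pi * Complex.I * (((m % p : ℕ) : ℂ) + (p : ℂ) * ((m / p : ℕ) : ℂ)) / p
      = 2 * Real.pi * Complex.I * ((m % p : ℕ) : ℂ) / p
        + ((m / p : ℕ) : ℂ) * (2 * Real.pi * Complex.I) by field_simp]
  rw [Complex.exp_add, Complex.exp_nat_mul_two_pi_mul_I, mul_one]

noncomputable def psiChar : AddChar F ℂ where
  toFun := psi p F
  map_zero_eq_one' := by simp [psi, map_zero]
  map_add_eq_mul' := by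
    intro a b
    simp only [psi, map_add]
    rw [ZMod.val_add, exp_mod, Nat.cast_add]
    rw [show 2 * Real.pi * Complex.I *
        (((Algebra.trace (ZMod p) F a).val : ℂ) + ((Algebra.trace (ZMod p) F b).val : ℂ)) / p
      = 2 * Real.pi * Complex.I * ((Algebra.trace (ZMod p) F a).val : ℂ) / p
        + 2 * Real.pi * Complex.I * ((Algebra.trace (ZMod p) F b).val : ℂ) / p by ring]
    rw [Complex.exp_add]

lemma psiChar_apply (x : F) : psiChar p F x = psi p F x := rfl

lemma psi_ne_one_of_trace_ne {b : F} (hb : Algebra.trace (ZMod p) F b ≠ 0) :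
    psi p F b ≠ 1 := by
  unfold psi
  intro hf
  rw [Complex.exp_eq_one_iff] at hf
  obtain ⟨n, hn⟩ := hf
  have hp := pC_ne p
  have h2 : (2 : ℂ) * Real.pi * Complex.I ≠ 0 := by
    simp [Real.pi_ne_zero, Complex.I_ne_zero]
  have hval : ((Algebra.trace (ZMod p) F b).val : ℂ) = (n : ℂ) * p := by
    rw [div_eq_iff hp] at hn
    have h3 : ((Algebra.trace (ZMod p) F b).val : ℂ) * (2 * Real.pi * Complex.I)
        = ((n:ℂ) * p) * (2 * Real.pi * Complex.I) := by linear_combination hn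
    exact mul_right_cancel₀ h2 h3
  have hval' : ((Algebra.trace (ZMod p) F b).val : ℤ) = n * p := by exact_mod_cast hval
  have hlt : (Algebra.trace (ZMod p) F b).val < p := ZMod.val_lt _
  have hne : (Algebra.trace (ZMod p) F b).val ≠ 0 := by
    simpa [ZMod.val_eq_zero] using hb
  have hp0 : (0:ℤ) < p := by exact_mod_cast (Fact.out (p := p.Prime)).pos
  rcases le_or_gt n 0 with hle | hlt2
  · nlinarith [Int.natCast_pos.mpr (Nat.pos_of_ne_zero hne)]
  · have h1n : (1:ℤ) ≤ n := hlt2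
    nlinarith [Int.ofNat_lt.mpr hlt]

lemma psiChar_ne_one : psiChar p F ≠ 1 := by
  obtain ⟨b, hb⟩ := tnd p F (one_ne_zero (α := F))
  rw [one_mul] at hb
  exact AddChar.ne_one_iff.2 ⟨b, psi_ne_one_of_trace_ne p F hb⟩

open scoped Classical in
lemma sum_psi_mul (b : F) :
    ∑ x : F, psi p F (x * b) = if b = 0 then (Fintype.card F : ℂ) else 0 := by
  have := AddChar.sum_mulShift (ψ := psiChar p F) b
    (AddChar.IsPrimitive.of_ne_one (psiChar_ne_one p F))
  simpa [psiChar_apply] using this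

lemma sum_psi : ∑ x : F, psi p F x = 0 := by
  simpa [psiChar_apply] using AddChar.sum_eq_zero_of_ne_one (psiChar_ne_one p F)

open scoped Classical in
lemma pow_d_bijective (d : ℕ) (hd : 0 < d) (hcop : Nat.Coprime d (Fintype.card F - 1)) :
    Function.Bijective (fun x : F => x ^ d) := by
  rw [Fintype.bijective_iff_injective_and_card]
  refine ⟨fun x y hxy => ?_, rfl⟩
  simp only at hxy
  rcases eq_or_ne y 0 with rfl | hy
  · rw [zero_pow hd.ne'] at hxy
    exact pow_eq_zero_iff hd.ne' |>.mp hxy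
  rcases eq_or_ne x 0 with rfl | hx
  · rw [zero_pow hd.ne'] at hxy
    exact ((pow_eq_zero_iff hd.ne').mp hxy.symm).symm ▸ rfl
  · have hc : (Nat.card Fˣ).Coprime d := by
      rw [Nat.card_eq_fintype_card, Fintype.card_units]
      exact hcop.symm
    have hinj := (powCoprime hc).injective (a₁ := Units.mk0 x hx) (a₂ := Units.mk0 y hy)
    have h2 : (Units.mk0 x hx) ^ d = (Units.mk0 y hy) ^ d := by
      ext; simpa using hxy
    simpa [Units.ext_iff] using hinj h2

lemma neg_pow_d (d : ℕ) (hcop : Nat.Coprime d (Fintype.card F - 1))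
    (hch : CharP F p) (w : F) :
    (-w) ^ d = -(w ^ d) := by
  by_cases hp2 : p = 2
  · haveI : CharP F 2 := hp2 ▸ ‹CharP F p›
    rw [CharTwo.neg_eq, CharTwo.neg_eq]
  · have hodd : Odd d := by
      have hoddq : Odd (Fintype.card F) := by
        obtain ⟨n, hpp, hn⟩ := FiniteField.card F p
        rw [hn]
        exact (hpp.odd_of_ne_two hp2).pow
      have heven : Even (Fintype.card F - 1) := Nat.Odd.sub_odd hoddq odd_one
      rcases Nat.even_or_odd d with he | ho
      · exfalso
        have h2 : 2 ∣ Nat.gcd d (Fintype.card F - 1) :=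
          Nat.dvd_gcd he.two_dvd heven.two_dvd
        rw [hcop] at h2
        omega
      · exact ho
    exact hodd.neg_pow w

end aux
open scoped Classical in
theorem stmt_5 (p : ℕ) [Fact p.Prime] (F : Type*) [Field F] [Fintype F]
    [Algebra (ZMod p) F] (d : ℕ) (hd : 0 < d)
    (hcop : Nat.Coprime d (Fintype.card F - 1)) :
    ∑ u : Fˣ, (weilSum p F d u) ^ 3 =
      (Fintype.card F : ℂ) ^ 2 * ({v : F | v ^ d + (1 - v) ^ d = 1}.ncard : ℂ) := by
  classical
  haveI : CharP F p := charP_of_injective_algebraMap (algebraMap (ZMod p) F).injective p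
  have hψadd : ∀ a b : F, psi p F (a + b) = psi p F a * psi p F b := fun a b =>
    (psiChar p F).map_add_eq_mul a b
  have hψ0 : psi p F 0 = 1 := (psiChar p F).map_zero_eq_one
  have hbij := pow_d_bijective F d hd hcop
  have hneg : ∀ w : F, (-w) ^ d = -(w ^ d) := neg_pow_d p F d hcop ‹CharP F p›
  set q : ℂ := (Fintype.card F : ℂ) with hq
  set N : ℕ := (Finset.univ.filter (fun v : F => v ^ d + (1 - v) ^ d = 1)).card with hN
  -- W 0 = 0
  have hW0 : weilSum p F d 0 = 0 := by
    unfold weilSum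
    simp only [zero_mul, add_zero]
    rw [Fintype.sum_bijective _ hbij (fun x => psi p F (x ^ d)) (fun x => psi p F x)
      (fun x => rfl)]
    exact sum_psi p F
  -- sum over units equals sum over F
  have hsplit : ∑ u : Fˣ, (weilSum p F d u) ^ 3 = ∑ u : F, (weilSum p F d u) ^ 3 := by
    rw [← Finset.add_sum_erase _ _ (Finset.mem_univ (0 : F)), hW0,
      zero_pow (by norm_num : (3:ℕ) ≠ 0), zero_add]
    refine Finset.sum_bij (fun (u : Fˣ) _ => (u : F)) ?_ ?_ ?_ ?_
    · intro u _; exact Finset.mem_erase.2 ⟨u.ne_zero, Finset.mem_univ _⟩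
    · intro a _ b _ h; exact Units.ext h
    · intro b hb; exact ⟨Units.mk0 b (Finset.mem_erase.1 hb).1, Finset.mem_univ _, rfl⟩
    · intro u _; rfl
  -- cube expansion
  have hcube : ∀ u : F, (weilSum p F d u) ^ 3
      = ∑ x : F, ∑ y : F, ∑ z : F,
          psi p F (x ^ d + y ^ d + z ^ d) * psi p F (u * (x + y + z)) := by
    intro u
    rw [show (weilSum p F d u) ^ 3
        = weilSum p F d u * (weilSum p F d u * weilSum p F d u) by ring]
    unfold weilSum
    simp only [Finset.mul_sum, Finset.sum_mul]
    refine Finset.sum_congr rfl fun x _ => ?_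
    refine Finset.sum_congr rfl fun y _ => ?_
    refine Finset.sum_congr rfl fun z _ => ?_
    rw [← hψadd, ← hψadd, ← hψadd]
    · congr 1
      ring
  have horth : ∑ u : F, (weilSum p F d u) ^ 3
      = ∑ x : F, ∑ y : F, psi p F (x ^ d + y ^ d + (-(x + y)) ^ d) * q := by
    simp_rw [hcube]
    have hswap : ∑ u : F, ∑ x : F, ∑ y : F, ∑ z : F,
          psi p F (x ^ d + y ^ d + z ^ d) * psi p F (u * (x + y + z))
        = ∑ x : F, ∑ y : F, ∑ z : F, ∑ u : F,
          psi p F (x ^ d + y ^ d + z ^ d) * psi p F (u * (x + y + z)) := by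
      rw [Finset.sum_comm]
      exact Finset.sum_congr rfl fun x _ =>
        Finset.sum_comm.trans (Finset.sum_congr rfl fun y _ => Finset.sum_comm)
    rw [hswap]
    simp_rw [← Finset.mul_sum, sum_psi_mul p F]
    refine Finset.sum_congr rfl fun x _ => ?_
    refine Finset.sum_congr rfl fun y _ => ?_
    rw [Finset.sum_eq_single (-(x + y))]
    · rw [if_pos (by ring)]
    · intro z _ hz
      rw [if_neg, mul_zero]
      intro h
      exact hz (by linear_combination h)
    · intro h; exact absurd (Finset.mem_univ _) h
  -- reindex pairs by s = x + y
  have hpairs : ∑ x : F, ∑ y : F, psi p F (x ^ d + y ^ d + (-(x + y)) ^ d) * q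
      = ∑ s : F, ∑ x : F, psi p F (x ^ d + (s - x) ^ d + -(s ^ d)) * q := by
    have h1 : ∀ x : F, ∑ y : F, psi p F (x ^ d + y ^ d + (-(x + y)) ^ d) * q
        = ∑ s : F, psi p F (x ^ d + (s - x) ^ d + -(s ^ d)) * q := by
      intro x
      exact Fintype.sum_bijective (fun y => x + y) (Equiv.addLeft x).bijective _ _
        (fun y => by rw [add_sub_cancel_left, hneg])
    simp_rw [h1]
    exact Finset.sum_comm
  -- the s = 0 term
  have hs0 : ∑ x : F, psi p F (x ^ d + ((0:F) - x) ^ d + -((0:F) ^ d)) * q = q * q := by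
    have h1 : ∀ x : F, psi p F (x ^ d + ((0:F) - x) ^ d + -((0:F) ^ d)) = 1 := by
      intro x
      rw [zero_sub, hneg, zero_pow hd.ne', neg_zero, add_zero, add_neg_cancel, hψ0]
    simp_rw [h1, one_mul]
    rw [Finset.sum_const, Finset.card_univ, nsmul_eq_mul, ← hq]
  -- the s ≠ 0 terms, reindexed by x = v * s
  have hsne : ∀ s : F, s ≠ 0 → ∑ x : F, psi p F (x ^ d + (s - x) ^ d + -(s ^ d)) * q
      = ∑ v : F, psi p F (s ^ d * (v ^ d + (1 - v) ^ d - 1)) * q := by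
    intro s hs
    refine (Fintype.sum_bijective (fun v : F => v * s)
      (Equiv.mulRight₀ s hs).bijective _ _ ?_).symm
    intro v
    have harg : s ^ d * (v ^ d + (1 - v) ^ d - 1)
        = (v * s) ^ d + (s - v * s) ^ d + -(s ^ d) := by
      rw [mul_pow, show s - v * s = (1 - v) * s from by ring, mul_pow]
      ring
    rw [harg]
  -- inner sum over nonzero s
  have hinner : ∀ c : F, ∑ s ∈ Finset.univ.erase (0:F), psi p F (s ^ d * c)
      = (if c = 0 then q else 0) - 1 := by
    intro c
    rw [Finset.sum_erase_eq_sub (Finset.mem_univ (0:F)), zero_pow hd.ne', zero_mul, hψ0]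
    congr 1
    rw [Fintype.sum_bijective _ hbij (fun s : F => psi p F (s ^ d * c))
      (fun t : F => psi p F (t * c)) (fun s => rfl)]
    rw [sum_psi_mul p F c, hq]
  -- the s ≠ 0 part of the sum
  have herase : ∑ s ∈ Finset.univ.erase (0:F), ∑ x : F,
        psi p F (x ^ d + (s - x) ^ d + -(s ^ d)) * q
      = ((N : ℂ) * q - q) * q := by
    rw [Finset.sum_congr rfl (fun s hs => hsne s (Finset.mem_erase.1 hs).1)]
    rw [Finset.sum_comm]
    have h2 : ∀ v : F, ∑ s ∈ Finset.univ.erase (0:F),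
          psi p F (s ^ d * (v ^ d + (1 - v) ^ d - 1)) * q
        = ((if (v ^ d + (1 - v) ^ d - 1) = 0 then q else 0) - 1) * q := by
      intro v
      rw [← Finset.sum_mul, hinner]
    rw [Finset.sum_congr rfl fun v _ => h2 v]
    simp_rw [sub_mul, one_mul, ite_mul, zero_mul, sub_eq_zero]
    rw [Finset.sum_sub_distrib, Finset.sum_ite, Finset.sum_const, Finset.sum_const_zero,
      add_zero, Finset.sum_const, Finset.card_univ, ← hN, nsmul_eq_mul, nsmul_eq_mul, ← hq]
    ring
  -- assemble
  have hNcard : (({v : F | v ^ d + (1 - v) ^ d = 1}.ncard : ℕ) : ℂ) = (N : ℂ) := by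
    rw [Set.ncard_eq_toFinset_card', Set.toFinset_setOf]
  rw [hsplit, horth, hpairs, ← Finset.add_sum_erase _ _ (Finset.mem_univ (0:F)),
    hs0, herase, hNcard]
  ring
end

section
/- Suppose W_{F,d} takes exactly three values 0, a, b on F* with a, b nonzero integers. Then a and b have opposite signs. -/
open Complex

section Aux
variable (p : ℕ) [Fact p.Prime] (F : Type*) [Field F] [Fintype F] [Algebra (ZMod p) F]

noncomputable def Psi : AddChar F ℂ :=
  (ZMod.stdAddChar (N := p)).compAddMonoidHom (Algebra.trace (ZMod p) F).toAddMonoidHom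

lemma psi_eq (x : F) : psi p F x = Psi p F x := by
  simp only [Psi, AddChar.compAddMonoidHom_apply, LinearMap.toAddMonoidHom_coe,
    ZMod.stdAddChar_apply, ZMod.toCircle_apply, psi]

lemma charP_F : CharP F p :=
  (RingHom.charP_iff (algebraMap (ZMod p) F) ((algebraMap (ZMod p) F).injective) p).mp inferInstance

lemma Psi_ne_one : Psi p F ≠ 1 := by
  have hc : CharP F p := charP_F p F
  have hp : ringChar F = p := ringChar.eq F p
  have : ∃ x : F, Algebra.trace (ZMod p) F x ≠ 0 := by
    subst hp
    obtain ⟨y, hy⟩ := FiniteField.trace_to_zmod_nondegenerate F (one_ne_zero (α := F))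
    exact ⟨1 * y, hy⟩
  obtain ⟨x, hx⟩ := this
  rw [AddChar.ne_one_iff]
  refine ⟨x, fun h => hx ?_⟩
  have : ZMod.stdAddChar (Algebra.trace (ZMod p) F x) = ZMod.stdAddChar (0 : ZMod p) := by
    rw [AddChar.map_zero_eq_one]; exact h
  exact ZMod.injective_stdAddChar this

lemma sum_Psi_mul (x : F) (hx : x ≠ 0) : ∑ u : F, Psi p F (u * x) = 0 := by
  have hprim : (Psi p F).IsPrimitive := AddChar.IsPrimitive.of_ne_one (Psi_ne_one p F)
  have := AddChar.sum_eq_zero_of_ne_one (hprim hx)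
  simpa only [AddChar.mulShift_apply, mul_comm] using this

lemma weilSum_apply (d : ℕ) (u : F) :
    weilSum p F d u = ∑ x : F, Psi p F (x ^ d) * Psi p F (u * x) := by
  simp only [weilSum, psi_eq, AddChar.map_add_eq_mul]

lemma sum_weilSum (d : ℕ) (hd : 0 < d) :
    ∑ u : F, weilSum p F d u = (Fintype.card F : ℂ) := by
  simp only [weilSum_apply]
  rw [Finset.sum_comm]
  have : ∀ x : F, (∑ u : F, Psi p F (x ^ d) * Psi p F (u * x))
      = Psi p F (x ^ d) * ∑ u : F, Psi p F (u * x) := fun x => by rw [Finset.mul_sum]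
  simp only [this]
  rw [Finset.sum_eq_single_of_mem 0 (Finset.mem_univ 0)
    (fun x _ hx => by rw [sum_Psi_mul p F x hx, mul_zero])]
  simp [zero_pow hd.ne', AddChar.map_zero_eq_one]

include p in
lemma neg_pow_key (d : ℕ) (hcop : Nat.Coprime d (Fintype.card F - 1)) (x : F) :
    x ^ d + (-x) ^ d = 0 := by
  rcases Nat.even_or_odd d with he | ho
  · -- d even forces char 2
    have hc : CharP F p := charP_F p F
    have hq : ∃ n : ℕ+, Nat.Prime p ∧ Fintype.card F = p ^ (n : ℕ) := FiniteField.card F p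
    obtain ⟨n, hp, hcard⟩ := hq
    have hodd : ¬ (2 ∣ Fintype.card F - 1) := by
      intro h2
      have : 2 ∣ Nat.gcd d (Fintype.card F - 1) := Nat.dvd_gcd he.two_dvd h2
      rw [hcop] at this
      omega
    have hcard1 : 1 ≤ Fintype.card F := Fintype.card_pos
    have heven : 2 ∣ Fintype.card F := by omega
    have hp2 : p = 2 := by
      rw [hcard] at heven
      have := (Nat.prime_two.dvd_of_dvd_pow heven)
      exact ((Nat.prime_dvd_prime_iff_eq Nat.prime_two hp).mp this).symm
    have : CharP F 2 := by rwa [hp2] at hc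
    rw [CharTwo.neg_eq, CharTwo.add_self_eq_zero]
  · rw [ho.neg_pow, add_neg_cancel]

lemma sum_weilSum_sq (d : ℕ) (hcop : Nat.Coprime d (Fintype.card F - 1)) :
    ∑ u : F, (weilSum p F d u) ^ 2 = (Fintype.card F : ℂ) ^ 2 := by
  have hsq : ∀ u : F, (weilSum p F d u) ^ 2
      = ∑ x : F, ∑ y : F, Psi p F (x ^ d + y ^ d) * Psi p F (u * (x + y)) := by
    intro u
    rw [weilSum, sq, Finset.sum_mul_sum]
    refine Finset.sum_congr rfl fun x _ => Finset.sum_congr rfl fun y _ => ?_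
    rw [psi_eq, psi_eq, ← AddChar.map_add_eq_mul, ← AddChar.map_add_eq_mul]
    congr 1
    ring
  simp only [hsq]
  rw [Finset.sum_comm]
  have swap2 : ∀ x : F, (∑ u : F, ∑ y : F, Psi p F (x ^ d + y ^ d) * Psi p F (u * (x + y)))
      = ∑ y : F, Psi p F (x ^ d + y ^ d) * ∑ u : F, Psi p F (u * (x + y)) := by
    intro x
    rw [Finset.sum_comm]
    exact Finset.sum_congr rfl fun y _ => (Finset.mul_sum _ _ _).symm
  simp only [swap2]
  have inner : ∀ x : F, (∑ y : F, Psi p F (x ^ d + y ^ d) * ∑ u : F, Psi p F (u * (x + y)))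
      = (Fintype.card F : ℂ) := by
    intro x
    rw [Finset.sum_eq_single_of_mem (-x) (Finset.mem_univ _)
      (fun y _ hy => by
        rw [sum_Psi_mul p F (x + y) (fun h => hy (by linear_combination h - x)), mul_zero])]
    have h1 : x ^ d + (-x) ^ d = 0 := neg_pow_key p F d hcop x
    rw [h1, AddChar.map_zero_eq_one, one_mul]
    simp [AddChar.map_zero_eq_one]
  simp only [inner]
  rw [Finset.sum_const, Finset.card_univ, nsmul_eq_mul, sq]

lemma weilSum_zero (d : ℕ) (hd : 0 < d) (hcop : Nat.Coprime d (Fintype.card F - 1)) :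
    weilSum p F d 0 = 0 := by
  classical
  have hbij : Function.Bijective (fun x : F => x ^ d) := by
    rw [Fintype.bijective_iff_injective_and_card]
    refine ⟨fun x y hxy => ?_, rfl⟩
    simp only at hxy
    rcases eq_or_ne y 0 with rfl | hy
    · rw [zero_pow hd.ne'] at hxy
      exact pow_eq_zero_iff hd.ne' |>.mp hxy
    rcases eq_or_ne x 0 with rfl | hx
    · rw [zero_pow hd.ne'] at hxy
      exact ((pow_eq_zero_iff hd.ne').mp hxy.symm).symm
    · have hcop' : (Nat.card Fˣ).Coprime d := by
        rw [Nat.card_eq_fintype_card, Fintype.card_units]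
        exact hcop.symm
      have h2 : Units.mk0 x hx = Units.mk0 y hy := by
        apply (powCoprime hcop').injective
        ext
        simpa [powCoprime, Units.val_pow_eq_pow_val] using hxy
      simpa using congrArg Units.val h2
  rw [weilSum]
  simp only [zero_mul, add_zero, psi_eq]
  rw [Fintype.sum_bijective _ hbij _ _ (fun x => rfl)]
  exact AddChar.sum_eq_zero_of_ne_one (Psi_ne_one p F)

open scoped Classical in
lemma sum_units (f : F → ℂ) (h0 : f 0 = 0) : ∑ u : Fˣ, f ↑u = ∑ x : F, f x := by
  classical
  calc ∑ u : Fˣ, f ↑u = ∑ x : {x : F // x ≠ 0}, f ↑x :=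
        Fintype.sum_equiv unitsEquivNeZero _ _ (fun u => rfl)
    _ = ∑ x ∈ ({0}ᶜ : Finset F), f x := (Finset.sum_subtype _ (by simp) f).symm
    _ = ∑ x : F, f x := by
        rw [← Finset.sum_add_sum_compl ({0} : Finset F) f, Finset.sum_singleton, h0, zero_add]

lemma keyInt (a b nA nB q : ℤ) (ha : 1 ≤ a) (hb : 1 ≤ b) (hlt : a < b)
    (hnA : 1 ≤ nA) (hnB : 1 ≤ nB)
    (h1 : a*nA + b*nB = q) (h2 : a^2*nA + b^2*nB = q^2) : False := by
  have hbq : b ≤ q := by nlinarith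
  nlinarith [mul_le_mul_of_nonneg_right (mul_le_mul_of_nonneg_right hlt.le
      (by linarith : (0:ℤ) ≤ a)) (by linarith : (0:ℤ) ≤ nA),
    mul_le_mul_of_nonneg_right hbq (by positivity : (0:ℤ) ≤ b*nB)]

end Aux

open scoped Classical in
theorem stmt_14 (p : ℕ) [Fact p.Prime] (F : Type*) [Field F] [Fintype F]
    [Algebra (ZMod p) F] (d : ℕ) (hd : 0 < d)
    (hcop : Nat.Coprime d (Fintype.card F - 1))
    (a b : ℤ) (ha : a ≠ 0) (hb : b ≠ 0) (hab : a ≠ b)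
    (hvals : (Set.range fun u : Fˣ => weilSum p F d u) = {0, (a : ℂ), (b : ℂ)}) :
    a * b < 0 := by
  classical
  set g : Fˣ → ℂ := fun u => weilSum p F d ↑u with hg
  have hmem : ∀ u : Fˣ, g u = 0 ∨ g u = a ∨ g u = b := by
    intro u
    have h1 : g u ∈ Set.range (fun u : Fˣ => weilSum p F d ↑u) := Set.mem_range_self u
    rw [hvals] at h1
    simpa using h1
  have hAne : ∃ u : Fˣ, g u = a := by
    have : (a : ℂ) ∈ Set.range (fun u : Fˣ => weilSum p F d ↑u) := by rw [hvals]; simp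
    exact this
  have hBne : ∃ u : Fˣ, g u = b := by
    have : (b : ℂ) ∈ Set.range (fun u : Fˣ => weilSum p F d ↑u) := by rw [hvals]; simp
    exact this
  have hne : (a : ℂ) ≠ (b : ℂ) := fun h => hab (by exact_mod_cast h)
  set A : Finset Fˣ := Finset.univ.filter (fun u => g u = a) with hA
  set B : Finset Fˣ := Finset.univ.filter (fun u => g u = b) with hB
  have step : ∀ h : ℂ → ℂ, h 0 = 0 → ∑ u : Fˣ, h (g u) = A.card • h a + B.card • h b := by
    intro h h0
    rw [← Finset.sum_filter_add_sum_filter_not Finset.univ (fun u => g u = a)]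
    have e1 : ∑ u ∈ Finset.univ.filter (fun u => g u = a), h (g u) = A.card • h (a : ℂ) := by
      rw [Finset.sum_congr rfl (fun u hu => by rw [(Finset.mem_filter.mp hu).2]),
        Finset.sum_const, hA]
    rw [e1]
    congr 1
    rw [← Finset.sum_filter_add_sum_filter_not _ (fun u => g u = b), Finset.filter_filter]
    have e2 : Finset.univ.filter (fun u : Fˣ => ¬ g u = a ∧ g u = b) = B := by
      ext u
      simp only [Finset.mem_filter, Finset.mem_univ, true_and, hB]
      exact ⟨fun hu => hu.2, fun hu => ⟨fun h' => hne (by rw [← h', ← hu]), hu⟩⟩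
    rw [e2]
    have e3 : ∑ u ∈ B, h (g u) = B.card • h (b : ℂ) := by
      rw [Finset.sum_congr rfl (fun u hu => by
          have hub : g u = b := (Finset.mem_filter.mp hu).2
          rw [hub]), Finset.sum_const]
    rw [e3]
    have e4 : ∑ u ∈ (Finset.univ.filter (fun u : Fˣ => ¬ g u = a)).filter
        (fun u => ¬ g u = b), h (g u) = 0 := by
      refine Finset.sum_eq_zero fun u hu => ?_
      simp only [Finset.mem_filter, Finset.mem_univ, true_and] at hu
      rcases hmem u with h' | h' | h'
      · rw [h', h0]
      · exact absurd h' hu.1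
      · exact absurd h' hu.2
    rw [e4, add_zero]
  have hS1 : (A.card : ℂ) * a + B.card * b = (Fintype.card F : ℂ) := by
    have hst := step id rfl
    simp only [id, nsmul_eq_mul] at hst
    rw [← hst]
    simp only [hg]
    rw [sum_units F (weilSum p F d) (weilSum_zero p F d hd hcop), sum_weilSum p F d hd]
  have hS2 : (A.card : ℂ) * (a : ℂ) ^ 2 + B.card * (b : ℂ) ^ 2
      = (Fintype.card F : ℂ) ^ 2 := by
    have hst := step (fun z => z ^ 2) (by norm_num)
    simp only [nsmul_eq_mul] at hst
    rw [← hst]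
    simp only [hg]
    rw [sum_units F (fun x => weilSum p F d x ^ 2)
      (by simp [weilSum_zero p F d hd hcop]), sum_weilSum_sq p F d hcop]
  set q : ℤ := (Fintype.card F : ℤ) with hqdef
  have hq1 : 1 ≤ q := by
    have : (0:ℤ) < (Fintype.card F : ℤ) := by exact_mod_cast Fintype.card_pos (α := F)
    omega
  have hnA : 1 ≤ (A.card : ℤ) := by
    obtain ⟨u, hu⟩ := hAne
    have : u ∈ A := Finset.mem_filter.mpr ⟨Finset.mem_univ u, hu⟩
    exact_mod_cast Finset.card_pos.mpr ⟨u, this⟩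
  have hnB : 1 ≤ (B.card : ℤ) := by
    obtain ⟨u, hu⟩ := hBne
    have : u ∈ B := Finset.mem_filter.mpr ⟨Finset.mem_univ u, hu⟩
    exact_mod_cast Finset.card_pos.mpr ⟨u, this⟩
  have h1 : a * A.card + b * B.card = q := by
    have : (((a * A.card + b * B.card : ℤ)) : ℂ) = ((q : ℤ) : ℂ) := by
      push_cast
      linear_combination hS1
    exact_mod_cast this
  have h2 : a ^ 2 * A.card + b ^ 2 * B.card = q ^ 2 := by
    have : (((a ^ 2 * A.card + b ^ 2 * B.card : ℤ)) : ℂ) = (((q ^ 2 : ℤ)) : ℂ) := by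
      push_cast
      linear_combination hS2
    exact_mod_cast this
  by_contra hc
  push_neg at hc
  have hpos : 0 < a * b := lt_of_le_of_ne hc (by
    intro h
    rcases mul_eq_zero.mp h.symm with h' | h' <;> [exact ha h'; exact hb h'])
  rcases mul_pos_iff.mp hpos with ⟨ha', hb'⟩ | ⟨ha', hb'⟩
  · rcases hab.lt_or_gt with hlt | hlt
    · exact keyInt a b A.card B.card q ha' hb' hlt hnA hnB h1 h2
    · exact keyInt b a B.card A.card q hb' ha' hlt hnB hnA (by linarith) (by linarith)
  · nlinarith [mul_le_mul_of_nonneg_right (by linarith : a ≤ -1) (by linarith : (0:ℤ) ≤ (A.card:ℤ)),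
      mul_le_mul_of_nonneg_right (by linarith : b ≤ -1) (by linarith : (0:ℤ) ≤ (B.card:ℤ))]
end

section
/- Suppose W_{F,d} takes exactly three values 0, a, b on F* with a, b nonzero integers, and F has order q. Write |a| = a_o·a_p, |b| = b_o·b_p with a_p, b_p powers of p and a_o, b_o coprime to p. Then gcd(a_o, b_o) = 1. -/
open Complex

section aux
variable (p : ℕ) [Fact p.Prime] (F : Type*) [Field F] [Fintype F] [Algebra (ZMod p) F]

lemma zetaP_pow : Complex.exp (2 * Real.pi * Complex.I / p) ^ p = 1 :=
  (Complex.isPrimitiveRoot_exp p (Fact.out (p := p.Prime)).ne_zero).pow_eq_one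

/-- `psi` as a bundled additive character. -/
noncomputable def chiF : AddChar F ℂ :=
  (AddChar.zmodChar p (zetaP_pow p)).compAddMonoidHom
    (Algebra.trace (ZMod p) F).toAddMonoidHom

lemma psi_eq_chiF (x : F) : psi p F x = chiF p F x := by
  unfold psi chiF
  rw [AddChar.compAddMonoidHom_apply, AddChar.zmodChar_apply, ← Complex.exp_nat_mul]
  simp only [LinearMap.toAddMonoidHom_coe]
  congr 1
  ring

lemma exists_trace_ne_zero : ∃ x : F, Algebra.trace (ZMod p) F x ≠ 0 := by
  have hchar : CharP F p := charP_of_injective_algebraMap (algebraMap (ZMod p) F).injective p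
  have hch : ringChar F = p := ringChar.eq F p
  subst hch
  obtain ⟨c, hc⟩ := FiniteField.trace_to_zmod_nondegenerate F (one_ne_zero (α := F))
  exact ⟨1 * c, hc⟩

lemma chiF_ne_one : chiF p F ≠ 1 := by
  intro h
  obtain ⟨x, hx⟩ := exists_trace_ne_zero p F
  have h1 : chiF p F x = 1 := by rw [h]; rfl
  unfold chiF at h1
  rw [AddChar.compAddMonoidHom_apply, AddChar.zmodChar_apply, LinearMap.toAddMonoidHom_coe] at h1
  have hprim : IsPrimitiveRoot (Complex.exp (2 * Real.pi * Complex.I / p)) p :=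
    Complex.isPrimitiveRoot_exp p (Fact.out (p := p.Prime)).ne_zero
  have hdvd : p ∣ (Algebra.trace (ZMod p) F x).val := hprim.dvd_of_pow_eq_one _ h1
  have hlt : (Algebra.trace (ZMod p) F x).val < p := ZMod.val_lt _
  have : (Algebra.trace (ZMod p) F x).val = 0 := Nat.eq_zero_of_dvd_of_lt hdvd hlt
  exact hx ((ZMod.val_eq_zero _).mp this)

lemma chiF_primitive : AddChar.IsPrimitive (chiF p F) :=
  AddChar.IsPrimitive.of_ne_one (chiF_ne_one p F)

end aux

open scoped Classical in
theorem stmt_16 (p : ℕ) [Fact p.Prime] (F : Type*) [Field F] [Fintype F]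
    [Algebra (ZMod p) F] (d : ℕ) (hd : 0 < d)
    (hcop : Nat.Coprime d (Fintype.card F - 1))
    (a b : ℤ) (ha : a ≠ 0) (hb : b ≠ 0) (hab : a ≠ b)
    (hvals : (Set.range fun u : Fˣ => weilSum p F d u) = {0, (a : ℂ), (b : ℂ)})
    (ao ap bo bp : ℕ) (i j : ℕ)
    (hap : ap = p ^ i) (hbp : bp = p ^ j)
    (hao : ¬ p ∣ ao) (hbo : ¬ p ∣ bo)
    (haf : a.natAbs = ao * ap) (hbf : b.natAbs = bo * bp) :
    Nat.Coprime ao bo := by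
  classical
  set W : Fˣ → ℂ := fun u => weilSum p F d u with hW
  have hsum : ∑ u : Fˣ, W u = (Fintype.card F : ℂ) := by
    have h1 : ∑ u : Fˣ, W u = ∑ x ∈ Finset.univ.erase (0 : F), weilSum p F d x := by
      refine Finset.sum_bij (fun u _ => (u : F)) ?_ ?_ ?_ ?_
      · intro u _; exact Finset.mem_erase.mpr ⟨u.ne_zero, Finset.mem_univ _⟩
      · intro u _ v _ h; exact Units.ext h
      · intro x hx
        exact ⟨Units.mk0 x (Finset.mem_erase.mp hx).1, Finset.mem_univ _, rfl⟩
      · intro u _; rfl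
    have h2 := Finset.add_sum_erase Finset.univ (weilSum p F d) (Finset.mem_univ (0 : F))
    rw [weilSum_zero p F d hd hcop, zero_add] at h2
    rw [h1, h2, sum_weilSum p F d hd]
  have hmem : ∀ u : Fˣ, W u = 0 ∨ W u = (a : ℂ) ∨ W u = (b : ℂ) := by
    intro u
    have : W u ∈ ({0, (a : ℂ), (b : ℂ)} : Set ℂ) := by
      rw [← hvals]; exact ⟨u, rfl⟩
    simpa using this
  have hba : (b : ℂ) ≠ (a : ℂ) := by exact_mod_cast hab.symm
  set A := Finset.univ.filter fun u : Fˣ => W u = (a : ℂ) with hA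
  set B := Finset.univ.filter fun u : Fˣ => W u = (b : ℂ) with hB
  have hsplit : ∑ u : Fˣ, W u
      = ∑ u ∈ A, W u + ∑ u ∈ Finset.univ.filter (fun u : Fˣ => ¬ W u = (a : ℂ)), W u :=
    (Finset.sum_filter_add_sum_filter_not _ _ _).symm
  have hBsub : B ⊆ Finset.univ.filter (fun u : Fˣ => ¬ W u = (a : ℂ)) := by
    intro u hu
    simp only [hB, Finset.mem_filter] at hu ⊢
    exact ⟨hu.1, by rw [hu.2]; exact hba⟩
  have hrest : ∑ u ∈ Finset.univ.filter (fun u : Fˣ => ¬ W u = (a : ℂ)), W u = ∑ u ∈ B, W u := by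
    refine (Finset.sum_subset hBsub ?_).symm
    intro u hu hnB
    simp only [Finset.mem_filter, Finset.mem_univ, true_and] at hu
    simp only [hB, Finset.mem_filter, Finset.mem_univ, true_and] at hnB
    rcases hmem u with h | h | h
    · exact h
    · exact absurd h hu
    · exact absurd h hnB
  have hAsum : ∑ u ∈ A, W u = (A.card : ℂ) * a := by
    rw [Finset.sum_congr rfl (fun u hu => (Finset.mem_filter.mp hu).2), Finset.sum_const,
      nsmul_eq_mul]
  have hBsum : ∑ u ∈ B, W u = (B.card : ℂ) * b := by
    rw [Finset.sum_congr rfl (fun u hu => (Finset.mem_filter.mp hu).2), Finset.sum_const,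
      nsmul_eq_mul]
  have hkey : ((A.card : ℤ) * a + (B.card : ℤ) * b : ℤ) = (Fintype.card F : ℤ) := by
    have : (A.card : ℂ) * a + (B.card : ℂ) * b = (Fintype.card F : ℂ) := by
      rw [← hAsum, ← hBsum, ← hrest, ← hsplit, hsum]
    exact_mod_cast this
  set g := Nat.gcd ao bo with hg
  have hga : (g : ℤ) ∣ a := by
    have h1 : g ∣ a.natAbs := haf ▸ (Nat.gcd_dvd_left ao bo).mul_right ap
    exact dvd_trans (Int.natCast_dvd_natCast.mpr h1) (Int.natAbs_dvd.mpr dvd_rfl)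
  have hgb : (g : ℤ) ∣ b := by
    have h1 : g ∣ b.natAbs := hbf ▸ (Nat.gcd_dvd_right ao bo).mul_right bp
    exact dvd_trans (Int.natCast_dvd_natCast.mpr h1) (Int.natAbs_dvd.mpr dvd_rfl)
  have hgq : g ∣ Fintype.card F := by
    have : (g : ℤ) ∣ (Fintype.card F : ℤ) := by
      rw [← hkey]; exact dvd_add (hga.mul_left _) (hgb.mul_left _)
    exact_mod_cast this
  have hchar : CharP F p := charP_of_injective_algebraMap (algebraMap (ZMod p) F).injective p
  obtain ⟨n, -, hcard⟩ := FiniteField.card F p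
  have hpg : ¬ p ∣ g := fun h => hao (h.trans (Nat.gcd_dvd_left ao bo))
  have hcop2 : Nat.Coprime g (p ^ (n : ℕ)) :=
    Nat.Coprime.pow_right _ (((Fact.out (p := p.Prime)).coprime_iff_not_dvd.mpr hpg).symm)
  exact hcop2.eq_one_of_dvd (hcard ▸ hgq)
end
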